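/- Let X be locally path connected, H-SLT at x₀, and homotopically Hausdorff relative to K, where K is a normal subgroup of π₁(X, x₀) containing H. Then the endpoint projection p_K : X̃_K^wh → X has the unique path lifting property. -/

import Mathlib

/-!
Let `g₁, g₂` be lifts of the same path which agree at `0`, and represent `gᵢ t` by paths
`a t, b t` from `x₀`; then `g₁ t = g₂ t` exactly when `e t := [a t ⋆ (b t)⁻¹] ∈ K`. If
`e T ∉ K`, homotopic Hausdorffness at `x₀` gives a neighbourhood `W` of `x₀` with
`e T ∉ π₁(W)·K`. For `s` near `t`, continuity in the whisker topology lets us represent the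
lifts at `s` by `a t ⋆ β`, `b t ⋆ β'` with `β, β'` small, so `e s` differs from `e t` by the
conjugate of the small loop `β ⋆ β'⁻¹` along `a t`, which the `H`-SLT property moves into
`π₁(W)·H ⊆ π₁(W)·K`. Hence the coset of `e t` modulo `π₁(W)·K` is locally constant, so
constant on `I`, and `e T` lies in the coset of `e 0 ∈ K`: a contradiction.
-/

open Set TopologicalSpace unitInterval

universe u

namespace SLTF

attribute [local instance] Path.Homotopic.setoid

variable {X : Type u} [TopologicalSpace X]

/-- The homotopy class of a loop as an element of the fundamental group. -/
noncomputable def fl {x : X} (γ : Path x x) : FundamentalGroup X x :=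
  @FundamentalGroup.fromPath X _ x ⟦γ⟧

/-- Multiplication of fundamental-group elements in path-concatenation order:
`pmul a b` is the class of "`a` followed by `b`". -/
noncomputable def pmul {x : X} (a b : FundamentalGroup X x) : FundamentalGroup X x :=
  @FundamentalGroup.fromPath X _ x
    (Path.Homotopic.Quotient.trans (@FundamentalGroup.toPath X _ x a)
      (@FundamentalGroup.toPath X _ x b))

/-- A path in `X` starting at the base point `x`, recorded together with its end point. -/
structure PPath (X : Type u) [TopologicalSpace X] (x : X) where
  target : X
  path : Path x target

/-- Two paths starting at `x` are identified when they have the same end point and the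
class of `α ⬝ β⁻¹` satisfies the predicate `P` (e.g. membership in a subgroup `H`). -/
def HRel (x : X) (P : Path x x → Prop) (α β : PPath X x) : Prop :=
  ∃ h : α.target = β.target, P (α.path.trans ((β.path.cast rfl h).symm))

/-- The set `X̃` of `P`-equivalence classes of paths starting at `x`. -/
def Xtilde (x : X) (P : Path x x → Prop) : Type u := Quot (HRel x P)

/-- The class of a path in `X̃`. -/
def mkX (x : X) (P : Path x x → Prop) (α : PPath X x) : Xtilde x P := Quot.mk _ α

/-- The basic whisker-open set `([α], U)`: all classes of prolongations of `α` by a path in `U`. -/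
def whBasic (x : X) (P : Path x x → Prop) (α : PPath X x) (U : Set X) : Set (Xtilde x P) :=
  { q | ∃ (y : X) (β : Path α.target y), range ⇑β ⊆ U ∧ q = mkX x P ⟨y, α.path.trans β⟩ }

/-- The whisker topology on `X̃`, generated by the sets `([α], U)` for `U` an open
neighbourhood of the end point of `α`. -/
instance whTop (x : X) (P : Path x x → Prop) : TopologicalSpace (Xtilde x P) :=
  generateFrom
    { S | ∃ (α : PPath X x) (U : Set X), IsOpen U ∧ α.target ∈ U ∧ S = whBasic x P α U }

/-- The endpoint projection `p : X̃ → X`. -/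
def endpt (x : X) (P : Path x x → Prop) : Xtilde x P → X :=
  Quot.lift (fun α => α.target) (fun _ _ h => h.elim fun e _ => e)

/-- The space of paths in `X` starting at `x`, with the compact-open topology. -/
def PSp (X : Type u) [TopologicalSpace X] (x : X) : Type u := { f : C(I, X) // f 0 = x }

instance (x : X) : TopologicalSpace (PSp X x) := instTopologicalSpaceSubtype

/-- The natural surjection from the path space onto `X̃`. -/
def toXt (x : X) (P : Path x x → Prop) : PSp X x → Xtilde x P :=
  fun f => mkX x P ⟨f.1 1, ⟨f.1, f.2, rfl⟩⟩

/-- The quotient of the compact-open topology on `X̃`. -/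
def topTop (x : X) (P : Path x x → Prop) : TopologicalSpace (Xtilde x P) :=
  coinduced (toXt x P) inferInstance

/-- Membership in a subgroup `H`, as a predicate on loops. -/
noncomputable def loopMem (x : X) (H : Subgroup (FundamentalGroup X x)) : Path x x → Prop :=
  fun γ => fl γ ∈ H

/-- `X̃_H`, the classes of paths starting at `x₀` modulo `H`. -/
abbrev XtildeH (x₀ : X) (H : Subgroup (FundamentalGroup X x₀)) : Type u :=
  Xtilde x₀ (loopMem x₀ H)

/-- The fiber of the endpoint projection over `y`, with the subspace (whisker) topology. -/
abbrev Fib (x : X) (P : Path x x → Prop) (y : X) : Type u :=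
  { q : Xtilde x P // endpt x P q = y }

/-- The class in the fiber over `y` of a path from `x` to `y`. -/
def mkFib (x : X) (P : Path x x → Prop) {y : X} (δ : Path x y) : Fib x P y :=
  ⟨mkX x P ⟨y, δ⟩, rfl⟩

/-- The whisker topology on the fundamental group `π₁(X, x)`: basic neighbourhoods of `a`
are the sets `{a ⋆ [γ] : γ a loop in U at x}` for `U` an open neighbourhood of `x`. -/
noncomputable def whPi1 (x : X) : TopologicalSpace (FundamentalGroup X x) :=
  generateFrom
    { S | ∃ (a : FundamentalGroup X x) (U : Set X), IsOpen U ∧ x ∈ U ∧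
        S = { b | ∃ γ : Path x x, range ⇑γ ⊆ U ∧ b = pmul a (fl γ) } }

/-- The quotient topology on `π₁(X, x)` induced from the loop space with the
compact-open topology. -/
noncomputable def qtopPi1 (x : X) : TopologicalSpace (FundamentalGroup X x) :=
  coinduced (fun γ : Path x x => fl γ) inferInstance

/-- `X` is `H`-SLT at `x₀`. -/
noncomputable def IsHSLTAt (x₀ : X) (H : Subgroup (FundamentalGroup X x₀)) : Prop :=
  ∀ (y : X) (α : Path x₀ y) (U : Set X), IsOpen U → x₀ ∈ U →
    ∃ V : Set X, IsOpen V ∧ y ∈ V ∧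
      ∀ β : Path y y, range ⇑β ⊆ V →
        ∃ γ : Path x₀ x₀, range ⇑γ ⊆ U ∧
          fl ((α.trans (β.trans α.symm)).trans γ.symm) ∈ H

/-- `X` is SLT at `x`. -/
def IsSLTAt (X : Type u) [TopologicalSpace X] (x : X) : Prop :=
  ∀ (y : X) (α : Path x y) (U : Set X), IsOpen U → x ∈ U →
    ∃ V : Set X, IsOpen V ∧ y ∈ V ∧
      ∀ β : Path y y, range ⇑β ⊆ V →
        ∃ γ : Path x x, range ⇑γ ⊆ U ∧ (α.trans (β.trans α.symm)).Homotopic γ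

/-- `X` is an SLT space. -/
def IsSLT (X : Type u) [TopologicalSpace X] : Prop := ∀ x : X, IsSLTAt X x

/-- `α` (a path from `x` to `y`) is an `H`-SLT path: for every path `lam` from `x₀` to `x`
and open `U ∋ x` there is an open `V ∋ y` such that every loop `β` in `V` at `y` transfers
to a loop `γ` in `U` at `x` with `[α ⋆ β ⋆ α⁻¹ ⋆ γ⁻¹] ∈ [lam⁻¹ H lam]`, i.e.
`[lam ⋆ (α ⋆ β ⋆ α⁻¹ ⋆ γ⁻¹) ⋆ lam⁻¹] ∈ H`. -/
noncomputable def IsHSLTPath (x₀ : X) (H : Subgroup (FundamentalGroup X x₀)) {x y : X}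
    (α : Path x y) : Prop :=
  ∀ (lam : Path x₀ x) (U : Set X), IsOpen U → x ∈ U →
    ∃ V : Set X, IsOpen V ∧ y ∈ V ∧
      ∀ β : Path y y, range ⇑β ⊆ V →
        ∃ γ : Path x x, range ⇑γ ⊆ U ∧
          fl (lam.trans ((((α.trans (β.trans α.symm)).trans γ.symm)).trans lam.symm)) ∈ H

/-- `X` is an `H`-SLT space: for every `x` and every path `lam` from `x₀` to `x`, `X` is
`[lam⁻¹ H lam]`-SLT at `x`. -/
noncomputable def IsHSLTSpace (x₀ : X) (H : Subgroup (FundamentalGroup X x₀)) : Prop :=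
  ∀ (x y : X) (α : Path x y), IsHSLTPath x₀ H α

/-- Membership in the conjugate subgroup `[lam⁻¹ H lam]` of `π₁(X, x)`,
as a predicate on loops at `x`. -/
noncomputable def conjMem (x₀ : X) (H : Subgroup (FundamentalGroup X x₀)) {x : X}
    (lam : Path x₀ x) : Path x x → Prop :=
  fun δ => fl (lam.trans (δ.trans lam.symm)) ∈ H

/-- `X` is homotopically Hausdorff relative to `H`. -/
noncomputable def HomHausdorffRel (x₀ : X) (H : Subgroup (FundamentalGroup X x₀)) : Prop :=
  ∀ (y : X) (α : Path x₀ y) (g : FundamentalGroup X x₀), g ∉ H →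
    ∃ U : Set X, IsOpen U ∧ y ∈ U ∧
      ∀ γ : Path y y, range ⇑γ ⊆ U →
        ¬ ∃ h ∈ H, fl (α.trans (γ.trans α.symm)) = pmul h g

/-- `X` is homotopically path Hausdorff relative to `H`. -/
noncomputable def HomPathHausdorffRel (x₀ : X) (H : Subgroup (FundamentalGroup X x₀)) : Prop :=
  ∀ (y : X) (α β : Path x₀ y), fl (α.trans β.symm) ∉ H →
    ∃ (n : ℕ) (t : Fin (n + 1) → I) (U : Fin n → Set X),
      t 0 = 0 ∧ t (Fin.last n) = 1 ∧ StrictMono t ∧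
      (∀ i : Fin n, IsOpen (U i)) ∧
      (∀ i : Fin n, ⇑α '' Set.Icc (t i.castSucc) (t i.succ) ⊆ U i) ∧
      ∀ γ : Path x₀ y,
        (∀ i : Fin n, ⇑γ '' Set.Icc (t i.castSucc) (t i.succ) ⊆ U i) →
        (∀ i : Fin (n + 1), γ (t i) = α (t i)) →
        fl (γ.trans β.symm) ∉ H

/-- The endpoint projection `p : X̃ → X` (with the whisker topology on `X̃`) has the
unique path lifting property. -/
def UPLP (x : X) (P : Path x x → Prop) : Prop :=
  ∀ g₁ g₂ : C(I, Xtilde x P), g₁ 0 = g₂ 0 →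
    (∀ t, endpt x P (g₁ t) = endpt x P (g₂ t)) → g₁ = g₂

/-- A semicovering map: a local homeomorphism with (continuous) unique lifting of paths
and of homotopies. -/
structure IsSemicovering {Y : Type u} [TopologicalSpace Y] (p : Y → X) : Prop where
  localHomeo : IsLocalHomeomorph p
  pathLift : ∀ (y : Y) (γ : C(I, X)), γ 0 = p y →
    ∃! γh : C(I, Y), γh 0 = y ∧ ∀ t, p (γh t) = γ t
  contPathLift : ∀ y : Y, ∃ L : { γ : C(I, X) // γ 0 = p y } → C(I, Y),
    Continuous L ∧ ∀ γ, (L γ) 0 = y ∧ ∀ t, p ((L γ) t) = (γ : C(I, X)) t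
  homotopyLift : ∀ (y : Y) (Φ : C(I × I, X)), Φ (0, 0) = p y →
    ∃! Φh : C(I × I, Y), Φh (0, 0) = y ∧ ∀ z, p (Φh z) = Φ z
  contHomotopyLift : ∀ y : Y, ∃ L : { Φ : C(I × I, X) // Φ (0, 0) = p y } → C(I × I, Y),
    Continuous L ∧ ∀ Φ, (L Φ) (0, 0) = y ∧ ∀ z, p ((L Φ) z) = (Φ : C(I × I, X)) z

/-- An `lpc₀`-covering map with `p₊π₁(Y, ·) = H`: a map which is equivalent, as a map
over `X`, to the endpoint projection `p_H : X̃_H → X` having the unique path lifting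
property (with `Y` path connected and locally path connected). -/
structure IsLpc0Covering {Y : Type u} [TopologicalSpace Y] (p : Y → X) (x₀ : X)
    (H : Subgroup (FundamentalGroup X x₀)) : Prop where
  pathConnected : PathConnectedSpace Y
  locPathConnected : LocPathConnectedSpace Y
  uplp : UPLP x₀ (loopMem x₀ H)
  equiv : ∃ φ : Y ≃ₜ XtildeH x₀ H, ∀ y, endpt x₀ (loopMem x₀ H) (φ y) = p y

/-- The homomorphism induced by `p` on fundamental groups, as a function. -/
noncomputable def pStar {Y : Type u} [TopologicalSpace Y] (p : C(Y, X)) (y₀ : Y) :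
    FundamentalGroup Y y₀ → FundamentalGroup X (p y₀) :=
  fun g => @FundamentalGroup.fromPath X _ (p y₀)
    (Path.Homotopic.Quotient.map (@FundamentalGroup.toPath Y _ y₀ g) p)

open Topology

section PathClasses

@[simp]
theorem _root_.Path.Homotopic.Quotient.symm_trans_cancel {x y z : X}
    (γ : Path.Homotopic.Quotient x y) (δ : Path.Homotopic.Quotient y z) :
    γ.symm.trans (γ.trans δ) = δ := by
  rw [← Path.Homotopic.Quotient.trans_assoc, Path.Homotopic.Quotient.symm_trans,
    Path.Homotopic.Quotient.refl_trans]

@[simp]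
theorem _root_.Path.Homotopic.Quotient.trans_symm_cancel {x y z : X}
    (γ : Path.Homotopic.Quotient x y) (δ : Path.Homotopic.Quotient x z) :
    γ.trans (γ.symm.trans δ) = δ := by
  rw [← Path.Homotopic.Quotient.trans_assoc, Path.Homotopic.Quotient.trans_symm,
    Path.Homotopic.Quotient.refl_trans]

variable {x₀ y : X}

theorem fl_eq_mk (γ : Path x₀ x₀) : fl γ = Path.Homotopic.Quotient.mk γ := rfl

theorem fl_refl : fl (Path.refl x₀) = 1 := rfl

theorem fl_trans (c d : Path x₀ x₀) : fl (c.trans d) = fl d * fl c := rfl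

theorem fl_symm (c : Path x₀ x₀) : fl c.symm = (fl c)⁻¹ := rfl

theorem pmul_eq_mul (g h : FundamentalGroup X x₀) : pmul g h = h * g := rfl

theorem fl_refl_trans_trans_refl_symm (c : Path x₀ x₀) :
    fl ((Path.refl x₀).trans (c.trans (Path.refl x₀).symm)) = fl c := by
  simp [fl_eq_mk]

theorem fl_trans_symm_self (p : Path x₀ y) : fl (p.trans p.symm) = 1 := by
  rw [FundamentalGroup.one_def]
  simp [fl_eq_mk]

theorem fl_trans_symm_eq_mul (p q r : Path x₀ y) :
    fl (p.trans r.symm) = fl (q.trans r.symm) * fl (p.trans q.symm) := by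
  simp [fl_eq_mk, FundamentalGroup.mul_def]

theorem fl_trans_symm_inv (p q : Path x₀ y) : (fl (p.trans q.symm))⁻¹ = fl (q.trans p.symm) :=
  inv_eq_of_mul_eq_one_right (by rw [← fl_trans_symm_eq_mul, fl_trans_symm_self])

theorem fl_trans_trans_symm {y' : X} (a b : Path x₀ y) (β β' : Path y y') :
    fl ((a.trans β).trans (b.trans β').symm) =
      fl (a.trans b.symm) * fl (a.trans ((β.trans β'.symm).trans a.symm)) := by
  simp [fl_eq_mk, FundamentalGroup.mul_def, Path.trans_symm]

end PathClasses

def loopSubgroup (x₀ : X) (W : Set X) (hW : x₀ ∈ W) : Subgroup (FundamentalGroup X x₀) where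
  carrier := {g | ∃ c : Path x₀ x₀, range c ⊆ W ∧ fl c = g}
  one_mem' := ⟨Path.refl x₀, by simpa using hW, fl_refl⟩
  mul_mem' := by
    rintro _ _ ⟨c, hc, rfl⟩ ⟨d, hd, rfl⟩
    exact ⟨d.trans c, by simpa [Path.trans_range] using ⟨hd, hc⟩, fl_trans d c⟩
  inv_mem' := by
    rintro _ ⟨c, hc, rfl⟩
    exact ⟨c.symm, by simpa using hc, fl_symm c⟩

section Xtilde

variable {x₀ y : X}

theorem exists_mkX_eq_of_endpt_eq {P : Path x₀ x₀ → Prop} (q : Xtilde x₀ P)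
    (hq : endpt x₀ P q = y) : ∃ p : Path x₀ y, mkX x₀ P ⟨y, p⟩ = q := by
  induction q using Quot.ind with
  | mk α => subst hq; exact ⟨α.path, rfl⟩

theorem exists_path_of_mkX_mem_whBasic {P : Path x₀ x₀ → Prop} {z : X} {U : Set X}
    {a : Path x₀ y} {c : Path x₀ z} (h : mkX x₀ P ⟨z, c⟩ ∈ whBasic x₀ P ⟨y, a⟩ U) :
    ∃ β : Path y z, range β ⊆ U ∧ mkX x₀ P ⟨z, c⟩ = mkX x₀ P ⟨z, a.trans β⟩ := by
  obtain ⟨z', β, hβ, hc⟩ := h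
  obtain rfl : z' = z := congrArg (endpt x₀ P) hc.symm
  exact ⟨β, hβ, hc⟩

theorem isOpen_whBasic (P : Path x₀ x₀ → Prop) (α : PPath X x₀) {U : Set X} (hU : IsOpen U)
    (hα : α.target ∈ U) : IsOpen (whBasic x₀ P α U) :=
  isOpen_generateFrom_of_mem ⟨α, U, hU, hα, rfl⟩

variable (K : Subgroup (FundamentalGroup X x₀))

theorem hRel_loopMem_iff (p q : Path x₀ y) :
    HRel x₀ (loopMem x₀ K) ⟨y, p⟩ ⟨y, q⟩ ↔ fl (p.trans q.symm) ∈ K :=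
  ⟨fun ⟨_, h⟩ => h, fun h => ⟨rfl, h⟩⟩

theorem equivalence_hRel_loopMem : Equivalence (HRel x₀ (loopMem x₀ K)) where
  refl := by
    rintro ⟨y, p⟩
    exact (hRel_loopMem_iff K p p).2 (by rw [fl_trans_symm_self]; exact K.one_mem)
  symm := by
    rintro ⟨y, p⟩ ⟨z, q⟩ ⟨e, h⟩
    dsimp only at e
    subst e
    refine (hRel_loopMem_iff K q p).2 ?_
    rw [← fl_trans_symm_inv]
    exact K.inv_mem h
  trans := by
    rintro ⟨y, p⟩ ⟨z, q⟩ ⟨w, r⟩ ⟨e, hpq⟩ ⟨e', hqr⟩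
    dsimp only at e e'
    subst e e'
    refine (hRel_loopMem_iff K p r).2 ?_
    rw [fl_trans_symm_eq_mul p q r]
    exact K.mul_mem hqr hpq

theorem mkX_eq_mkX_iff (p q : Path x₀ y) :
    mkX x₀ (loopMem x₀ K) ⟨y, p⟩ = mkX x₀ (loopMem x₀ K) ⟨y, q⟩ ↔ fl (p.trans q.symm) ∈ K :=
  Quot.eq.trans ((equivalence_hRel_loopMem K).eqvGen_iff.trans (hRel_loopMem_iff K p q))

theorem whBasic_mem_nhds (p : Path x₀ y) {U : Set X} (hU : IsOpen U) (hy : y ∈ U) :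
    whBasic x₀ (loopMem x₀ K) ⟨y, p⟩ U ∈ 𝓝 (mkX x₀ (loopMem x₀ K) ⟨y, p⟩) := by
  refine (isOpen_whBasic _ ⟨y, p⟩ hU hy).mem_nhds
    ⟨y, Path.refl y, by simpa using hy, ?_⟩
  refine ((mkX_eq_mkX_iff K _ _).2 ?_).symm
  convert K.one_mem
  rw [FundamentalGroup.one_def]
  simp [fl_eq_mk]

end Xtilde

theorem _root_.QuotientGroup.mk_mul_of_mem_normal {G : Type*} [Group G] {K L : Subgroup G}
    (hK : K.Normal) (hKL : K ≤ L) {k : G} (hk : k ∈ K) (g : G) :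
    (QuotientGroup.mk (k * g) : G ⧸ L) = QuotientGroup.mk g := by
  rw [QuotientGroup.eq]
  simpa [mul_assoc] using hKL (hK.conj_mem' k⁻¹ (K.inv_mem hk) g)

section Transfer

variable {x₀ : X} {H K L : Subgroup (FundamentalGroup X x₀)}

theorem coe_fl_eq_of_mkX_eq (hK : K.Normal) (hKL : K ≤ L) {y : X} {a a' b b' : Path x₀ y}
    (ha : mkX x₀ (loopMem x₀ K) ⟨y, a⟩ = mkX x₀ (loopMem x₀ K) ⟨y, a'⟩)
    (hb : mkX x₀ (loopMem x₀ K) ⟨y, b⟩ = mkX x₀ (loopMem x₀ K) ⟨y, b'⟩) :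
    (fl (a.trans b.symm) : FundamentalGroup X x₀ ⧸ L) = fl (a'.trans b'.symm) := by
  rw [mkX_eq_mkX_iff] at ha hb
  have ha' : fl (a'.trans a.symm) ∈ K := fl_trans_symm_inv a a' ▸ K.inv_mem ha
  rw [fl_trans_symm_eq_mul a' b b', fl_trans_symm_eq_mul a' a b,
    QuotientGroup.mk_mul_of_mem_normal hK hKL hb, QuotientGroup.mk_mul_of_mem _ (hKL ha')]

theorem IsHSLTAt.exists_open_conj_mem (hslt : IsHSLTAt x₀ H) {W : Set X} (hWo : IsOpen W)
    (hW : x₀ ∈ W) {y : X} (a : Path x₀ y) :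
    ∃ V : Set X, IsOpen V ∧ y ∈ V ∧ ∀ ℓ : Path y y, range ℓ ⊆ V →
      fl (a.trans (ℓ.trans a.symm)) ∈ loopSubgroup x₀ W hW ⊔ H := by
  obtain ⟨V, hVo, hV, hVW⟩ := hslt y a W hWo hW
  refine ⟨V, hVo, hV, fun ℓ hℓ => ?_⟩
  obtain ⟨γ, hγ, hγH⟩ := hVW ℓ hℓ
  have hsplit : fl (a.trans (ℓ.trans a.symm)) =
      fl γ * fl ((a.trans (ℓ.trans a.symm)).trans γ.symm) := by
    rw [fl_trans, fl_symm]
    group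
  rw [hsplit]
  exact mul_mem (Subgroup.mem_sup_left ⟨γ, hγ, rfl⟩) (Subgroup.mem_sup_right hγH)

theorem isLocallyConstant_coe_fl {Y : Type*} [TopologicalSpace Y] (hK : K.Normal) (hHK : H ≤ K)
    (hslt : IsHSLTAt x₀ H) {W : Set X} (hWo : IsOpen W) (hW : x₀ ∈ W)
    (g₁ g₂ : C(Y, XtildeH x₀ K)) {f : Y → X} (a b : ∀ t, Path x₀ (f t))
    (ha : ∀ t, mkX x₀ (loopMem x₀ K) ⟨f t, a t⟩ = g₁ t)
    (hb : ∀ t, mkX x₀ (loopMem x₀ K) ⟨f t, b t⟩ = g₂ t) :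
    IsLocallyConstant fun t =>
      (fl ((a t).trans (b t).symm) : FundamentalGroup X x₀ ⧸ (loopSubgroup x₀ W hW ⊔ K)) := by
  have hKL : K ≤ loopSubgroup x₀ W hW ⊔ K := le_sup_right
  refine (IsLocallyConstant.iff_eventually_eq _).2 fun t => ?_
  obtain ⟨V, hVo, hV, hVL⟩ := hslt.exists_open_conj_mem hWo hW (a t)
  have hnhds : ∀ (g : C(Y, XtildeH x₀ K)) (c : Path x₀ (f t)),
      mkX x₀ (loopMem x₀ K) ⟨f t, c⟩ = g t →
      g ⁻¹' whBasic x₀ (loopMem x₀ K) ⟨f t, c⟩ V ∈ 𝓝 t := fun g c hc =>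
    g.continuous.continuousAt.preimage_mem_nhds (hc ▸ whBasic_mem_nhds K c hVo hV)
  filter_upwards [hnhds g₁ (a t) (ha t), hnhds g₂ (b t) (hb t)] with s hs₁ hs₂
  rw [Set.mem_preimage, ← ha s] at hs₁
  rw [Set.mem_preimage, ← hb s] at hs₂
  obtain ⟨β, hβ, hβa⟩ := exists_path_of_mkX_mem_whBasic hs₁
  obtain ⟨β', hβ', hβb⟩ := exists_path_of_mkX_mem_whBasic hs₂
  have hloop : range ⇑(β.trans β'.symm) ⊆ V := by
    rw [Path.trans_range, Path.symm_range]
    exact union_subset hβ hβ'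
  rw [coe_fl_eq_of_mkX_eq hK hKL hβa hβb, fl_trans_trans_symm,
    QuotientGroup.mk_mul_of_mem _ (sup_le_sup_left hHK _ (hVL _ hloop))]

end Transfer

theorem HomHausdorffRel.exists_open_notMem_sup {x₀ : X} {K : Subgroup (FundamentalGroup X x₀)}
    (hK : K.Normal) (hhh : HomHausdorffRel x₀ K) {g : FundamentalGroup X x₀} (hg : g ∉ K) :
    ∃ W : Set X, IsOpen W ∧ ∃ hW : x₀ ∈ W, g ∉ loopSubgroup x₀ W hW ⊔ K := by
  obtain ⟨W, hWo, hW, hWg⟩ := hhh x₀ (Path.refl x₀) g hg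
  refine ⟨W, hWo, hW, fun hgL => ?_⟩
  obtain ⟨_, ⟨c, hc, rfl⟩, k, hk, hck⟩ := Subgroup.mem_sup_of_normal_right.1 hgL
  refine hWg c hc ⟨k⁻¹, K.inv_mem hk, ?_⟩
  rw [fl_refl_trans_trans_refl_symm, pmul_eq_mul, ← hck, mul_inv_cancel_right]

theorem eq_of_endpt_eq {Y : Type*} [TopologicalSpace Y] [PreconnectedSpace Y] {x₀ : X}
    {H K : Subgroup (FundamentalGroup X x₀)} (hK : K.Normal) (hHK : H ≤ K)
    (hslt : IsHSLTAt x₀ H) (hhh : HomHausdorffRel x₀ K) (g₁ g₂ : C(Y, XtildeH x₀ K)) (t₀ : Y)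
    (h₀ : g₁ t₀ = g₂ t₀)
    (hend : ∀ t, endpt x₀ (loopMem x₀ K) (g₁ t) = endpt x₀ (loopMem x₀ K) (g₂ t)) :
    g₁ = g₂ := by
  choose a ha using fun t => exists_mkX_eq_of_endpt_eq (g₁ t) rfl
  choose b hb using fun t => exists_mkX_eq_of_endpt_eq (g₂ t) (hend t).symm
  have hdiff : ∀ t, g₁ t = g₂ t ↔ fl ((a t).trans (b t).symm) ∈ K := fun t => by
    rw [← mkX_eq_mkX_iff, ha t, hb t]
  ext t
  by_contra ht
  obtain ⟨W, hWo, hW, hL⟩ := hhh.exists_open_notMem_sup hK ((hdiff t).not.1 ht)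
  have hconst := (isLocallyConstant_coe_fl hK hHK hslt hWo hW g₁ g₂ a b ha hb
    ).apply_eq_of_preconnectedSpace t₀ t
  have h₀L : fl ((a t₀).trans (b t₀).symm) ∈ loopSubgroup x₀ W hW ⊔ K :=
    Subgroup.mem_sup_right ((hdiff t₀).1 h₀)
  have htL := mul_mem h₀L (QuotientGroup.eq.1 hconst)
  rw [mul_inv_cancel_left] at htL
  exact hL htL

theorem statement7_general {X : Type u} [TopologicalSpace X] (x₀ : X)
    (H K : Subgroup (FundamentalGroup X x₀)) (hK : K.Normal) (hHK : H ≤ K)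
    (hslt : IsHSLTAt x₀ H) (hhh : HomHausdorffRel x₀ K) :
    UPLP x₀ (loopMem x₀ K) :=
  fun g₁ g₂ h₀ hend => eq_of_endpt_eq hK hHK hslt hhh g₁ g₂ 0 h₀ hend

/-- Let `X` be locally path connected, `H`-SLT at `x₀`, and homotopically
Hausdorff relative to `K`, where `K` is a normal subgroup of `π₁(X, x₀)` containing `H`.
Then the endpoint projection `p_K : X̃_K^wh → X` has the unique path lifting property. -/
theorem statement7 {X : Type u} [TopologicalSpace X] [PathConnectedSpace X]
    [LocallyPathConnectedSpace X] (x₀ : X)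
    (H K : Subgroup (FundamentalGroup X x₀)) (hK : K.Normal) (hHK : H ≤ K)
    (hslt : IsHSLTAt x₀ H) (hhh : HomHausdorffRel x₀ K) :
    UPLP x₀ (loopMem x₀ K) :=
  statement7_general x₀ H K hK hHK hslt hhh

end SLTF
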